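/- In the rising sun lemma decomposition, the total measure of the selected rectangles satisfies $\sum_j \mu(I_j) \le \frac{1}{A}\int_{I_0} \max(f, 0)\,d\mu$ whenever $A > 0$. -/

import Mathlib

open MeasureTheory Set

/-- An axis-parallel rectangle `∏ᵢ [aᵢ, bᵢ)` in `ℝⁿ`. -/
def rect {n : ℕ} (a b : Fin n → ℝ) : Set (Fin n → ℝ) :=
  Set.pi Set.univ fun i => Set.Ico (a i) (b i)

/-!
Each selected rectangle `I_j` has `A μ(I_j) = ∫_{I_j} f dμ ≤ ∫_{I_j} f⁺ dμ`. Summing over the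
pairwise disjoint `I_j` and using `f⁺ ≥ 0` together with `⋃ⱼ I_j ⊆ I₀` bounds
`A ∑ⱼ μ(I_j)` by `∫_{I₀} f⁺ dμ`.
-/

theorem measurableSet_rect {n : ℕ} (a b : Fin n → ℝ) : MeasurableSet (rect a b) :=
  MeasurableSet.univ_pi fun _ => measurableSet_Ico

section

variable {α : Type*} [MeasurableSpace α] {μ : Measure α} {f : α → ℝ} {s t : Set α} {A : ℝ}

/-- A nonzero mean value forces `0 < μ s < ∞`, because `⨍` is `0` otherwise. -/
theorem measureReal_mul_eq_setIntegral_of_setAverage_eq (hA : A ≠ 0)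
    (h : ⨍ x in s, f x ∂μ = A) : μ.real s * A = ∫ x in s, f x ∂μ := by
  rw [setAverage_eq, smul_eq_mul] at h
  have hs : μ.real s ≠ 0 := by
    rintro hs
    rw [hs, inv_zero, zero_mul] at h
    exact hA h.symm
  rw [← h, mul_inv_cancel_left₀ hs]

theorem mul_measureReal_le_setIntegral_max_zero_of_setAverage_eq (hA : A ≠ 0)
    (hf : IntegrableOn f s μ) (h : ⨍ x in s, f x ∂μ = A) :
    A * μ.real s ≤ ∫ x in s, max (f x) 0 ∂μ :=
  calc A * μ.real s = ∫ x in s, f x ∂μ := by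
        rw [mul_comm, measureReal_mul_eq_setIntegral_of_setAverage_eq hA h]
    _ ≤ ∫ x in s, max (f x) 0 ∂μ :=
        setIntegral_mono hf hf.pos_part fun x => le_max_left _ _

theorem mul_tsum_measureReal_le_setIntegral_max_zero {ι : Type*} [Countable ι]
    {s : ι → Set α} (hs : ∀ i, MeasurableSet (s i)) (hd : Pairwise (Function.onFun Disjoint s))
    (hst : ∀ i, s i ⊆ t) (hf : IntegrableOn f t μ) (hA : 0 < A)
    (havg : ∀ i, ⨍ x in s i, f x ∂μ = A) :
    A * ∑' i, μ.real (s i) ≤ ∫ x in t, max (f x) 0 ∂μ := by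
  have hg : IntegrableOn (fun x => max (f x) 0) t μ := hf.pos_part
  have hsum := hasSum_integral_iUnion hs hd (hg.mono_set (iUnion_subset hst))
  have hle : ∀ i, A * μ.real (s i) ≤ ∫ x in s i, max (f x) 0 ∂μ := fun i =>
    mul_measureReal_le_setIntegral_max_zero_of_setAverage_eq hA.ne'
      (hf.mono_set (hst i)) (havg i)
  have hsummable : Summable fun i => A * μ.real (s i) :=
    hsum.summable.of_nonneg_of_le (fun i => by positivity) hle
  calc A * ∑' i, μ.real (s i) = ∑' i, A * μ.real (s i) := tsum_mul_left.symm
    _ ≤ ∑' i, ∫ x in s i, max (f x) 0 ∂μ := hsummable.tsum_le_tsum hle hsum.summable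
    _ = ∫ x in ⋃ i, s i, max (f x) 0 ∂μ := hsum.tsum_eq
    _ ≤ ∫ x in t, max (f x) 0 ∂μ :=
        setIntegral_mono_set hg (.of_forall fun x => le_max_right _ _)
          (iUnion_subset hst).eventuallyLE

end

theorem rising_sun_total_measure_bound_general {n : ℕ}
    (μ : Measure (Fin n → ℝ))
    (a₀ b₀ : Fin n → ℝ) (f : (Fin n → ℝ) → ℝ) (hf : Integrable f μ)
    (A : ℝ) (hApos : 0 < A)
    (c d : ℕ → Fin n → ℝ) (N : Set ℕ)
    (hsub : ∀ j ∈ N, rect (c j) (d j) ⊆ rect a₀ b₀)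
    (hdisj : N.PairwiseDisjoint fun j => rect (c j) (d j))
    (havg : ∀ j ∈ N, ⨍ x in rect (c j) (d j), f x ∂μ = A) :
    ∑' j : N, (μ (rect (c j) (d j))).toReal ≤
      (1 / A) * ∫ x in rect a₀ b₀, max (f x) 0 ∂μ := by
  rw [one_div, le_inv_mul_iff₀ hApos]
  exact mul_tsum_measureReal_le_setIntegral_max_zero (fun _ => measurableSet_rect _ _)
    (hdisj.subtype _ _) (fun j => hsub j j.2) hf.integrableOn hApos (fun j => havg j j.2)

/-- The total measure bound in the rising sun lemma decomposition: if the
selected pairwise disjoint subrectangles `I_j ⊆ I₀` all have `μ`-mean value of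
`f` exactly `A > 0`, then `∑ⱼ μ(I_j) ≤ (1/A) ∫_{I₀} max(f, 0) dμ`. -/
theorem rising_sun_total_measure_bound {n : ℕ}
    (μ : Measure (Fin n → ℝ)) [IsFiniteMeasure μ] (hμ : μ ≪ volume)
    (a₀ b₀ : Fin n → ℝ) (f : (Fin n → ℝ) → ℝ) (hf : Integrable f μ)
    (A : ℝ) (hApos : 0 < A) (hA : ⨍ x in rect a₀ b₀, f x ∂μ ≤ A)
    (c d : ℕ → Fin n → ℝ) (N : Set ℕ)
    (hsub : ∀ j ∈ N, rect (c j) (d j) ⊆ rect a₀ b₀)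
    (hdisj : N.PairwiseDisjoint fun j => rect (c j) (d j))
    (havg : ∀ j ∈ N, ⨍ x in rect (c j) (d j), f x ∂μ = A) :
    ∑' j : N, (μ (rect (c j) (d j))).toReal ≤
      (1 / A) * ∫ x in rect a₀ b₀, max (f x) 0 ∂μ :=
  rising_sun_total_measure_bound_general μ a₀ b₀ f hf A hApos c d N hsub hdisj havg
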